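/- arXiv:2411.15947 — 7 statements merged into one kernel-verified Lean document; each statement's English description precedes it below -/
import Mathlib

section
/- There exists a unique function f : ℝ → ℝ with f(0) = 0 satisfying f'(t) = (1 + 2 f(t)^2)^(-1/2) for t ≥ 0 and f(t) = -f(-t) for t ≤ 0; moreover f is of class C¹ on ℝ, strictly increasing, and invertible. -/
/-!
The inverse of the solution is the explicit primitive `G y = ∫₀ʸ √(1 + 2 s²) ds`: since the
integrand is continuous, even and at least `1`, `G` is an odd `C¹` order isomorphism of `ℝ`, and
`f = G⁻¹` solves the equation by the inverse function rule. Conversely, any solution satisfies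
`(G ∘ f)' = 1` on `[0, ∞)`, hence `G ∘ f = id` there, and oddness determines `f` on `(-∞, 0]`.
-/

open Filter Set

noncomputable section

namespace DualVariable

def primitive (ρ : ℝ → ℝ) (y : ℝ) : ℝ := ∫ s in (0 : ℝ)..y, ρ s

section Primitive

variable {ρ : ℝ → ℝ} {c : ℝ}

theorem primitive_zero : primitive ρ 0 = 0 := intervalIntegral.integral_same

theorem hasDerivAt_primitive (hρ : Continuous ρ) (y : ℝ) : HasDerivAt (primitive ρ) (ρ y) y :=
  (hρ.integral_hasStrictDerivAt 0 y).hasDerivAt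

theorem continuous_primitive (hρ : Continuous ρ) : Continuous (primitive ρ) :=
  continuous_iff_continuousAt.2 fun y => (hasDerivAt_primitive hρ y).continuousAt

theorem primitive_neg (heven : ∀ s, ρ (-s) = ρ s) (y : ℝ) : primitive ρ (-y) = -primitive ρ y := by
  have h := intervalIntegral.integral_comp_neg (a := 0) (b := y) ρ
  simp only [heven, neg_zero] at h
  rw [primitive, primitive, intervalIntegral.integral_symm, h]

theorem monotone_primitive_sub_mul (hρ : Continuous ρ) (hρc : ∀ x, c ≤ ρ x) :
    Monotone fun y => primitive ρ y - c * y := by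
  have hderiv (y : ℝ) : HasDerivAt (fun y => primitive ρ y - c * y) (ρ y - c) y :=
    ((hasDerivAt_primitive hρ y).sub ((hasDerivAt_id' y).const_mul c)).congr_deriv (by ring)
  refine monotone_of_deriv_nonneg (fun y => (hderiv y).differentiableAt) fun y => ?_
  rw [(hderiv y).deriv]
  linarith [hρc y]

theorem mul_le_primitive (hρ : Continuous ρ) (hρc : ∀ x, c ≤ ρ x) {y : ℝ} (hy : 0 ≤ y) :
    c * y ≤ primitive ρ y := by
  have h := monotone_primitive_sub_mul hρ hρc hy
  simp only [primitive_zero, mul_zero, sub_zero] at h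
  linarith

theorem primitive_le_mul (hρ : Continuous ρ) (hρc : ∀ x, c ≤ ρ x) {y : ℝ} (hy : y ≤ 0) :
    primitive ρ y ≤ c * y := by
  have h := monotone_primitive_sub_mul hρ hρc hy
  simp only [primitive_zero, mul_zero, sub_zero] at h
  linarith

theorem strictMono_primitive (hρ : Continuous ρ) (hpos : ∀ x, 0 < ρ x) :
    StrictMono (primitive ρ) :=
  strictMono_of_deriv_pos fun y => (hasDerivAt_primitive hρ y).deriv ▸ hpos y

theorem surjective_primitive (hρ : Continuous ρ) (hc : 0 < c) (hρc : ∀ x, c ≤ ρ x) :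
    Function.Surjective (primitive ρ) :=
  (continuous_primitive hρ).surjective
    (tendsto_atTop_mono' atTop (eventually_atTop.2 ⟨0, fun _ => mul_le_primitive hρ hρc⟩)
      (tendsto_id.const_mul_atTop hc))
    (tendsto_atBot_mono' atBot (eventually_atBot.2 ⟨0, fun _ => primitive_le_mul hρ hρc⟩)
      (tendsto_id.const_mul_atBot hc))

def primitiveOrderIso (hρ : Continuous ρ) (hc : 0 < c) (hρc : ∀ x, c ≤ ρ x) : ℝ ≃o ℝ :=
  StrictMono.orderIsoOfSurjective (primitive ρ)
    (strictMono_primitive hρ fun x => hc.trans_le (hρc x)) (surjective_primitive hρ hc hρc)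

variable (hρ : Continuous ρ) (hc : 0 < c) (hρc : ∀ x, c ≤ ρ x)

@[simp]
theorem coe_primitiveOrderIso : ⇑(primitiveOrderIso hρ hc hρc) = primitive ρ :=
  StrictMono.coe_orderIsoOfSurjective _ _ _

theorem hasDerivAt_primitiveOrderIso_symm (t : ℝ) :
    HasDerivAt (primitiveOrderIso hρ hc hρc).symm
      (ρ ((primitiveOrderIso hρ hc hρc).symm t))⁻¹ t := by
  set e := primitiveOrderIso hρ hc hρc
  have hinv : ∀ u, primitive ρ (e.symm u) = u := fun u => by
    rw [← coe_primitiveOrderIso hρ hc hρc]; exact e.apply_symm_apply u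
  exact .of_local_left_inverse e.symm.continuous.continuousAt
    (hasDerivAt_primitive hρ (e.symm t)) (hc.trans_le (hρc _)).ne' (.of_forall hinv)

theorem contDiff_primitiveOrderIso_symm : ContDiff ℝ 1 (primitiveOrderIso hρ hc hρc).symm := by
  set e := primitiveOrderIso hρ hc hρc
  have hderiv := hasDerivAt_primitiveOrderIso_symm hρ hc hρc
  refine contDiff_one_iff_deriv.2 ⟨fun t => (hderiv t).differentiableAt, ?_⟩
  rw [show deriv e.symm = fun t => (ρ (e.symm t))⁻¹ from funext fun t => (hderiv t).deriv]
  exact (hρ.comp e.symm.continuous).inv₀ fun t => (hc.trans_le (hρc _)).ne'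

theorem primitiveOrderIso_symm_neg (heven : ∀ s, ρ (-s) = ρ s) (t : ℝ) :
    (primitiveOrderIso hρ hc hρc).symm (-t) = -(primitiveOrderIso hρ hc hρc).symm t := by
  rw [OrderIso.symm_apply_eq, coe_primitiveOrderIso, primitive_neg heven,
    ← coe_primitiveOrderIso hρ hc hρc, OrderIso.apply_symm_apply]

theorem eq_primitiveOrderIso_symm_of_deriv {f : ℝ → ℝ} (hf : Differentiable ℝ f)
    (hf0 : f 0 = 0) (hfd : ∀ t, 0 ≤ t → deriv f t = (ρ (f t))⁻¹) {t : ℝ} (ht : 0 ≤ t) :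
    f t = (primitiveOrderIso hρ hc hρc).symm t := by
  have hcomp : ∀ x ∈ Ico 0 t, HasDerivWithinAt (fun u => primitive ρ (f u)) 1 (Ici x) x := by
    intro x hx
    have h := (hasDerivAt_primitive hρ (f x)).comp x (hf x).hasDerivAt
    rw [hfd x hx.1, mul_inv_cancel₀ (hc.trans_le (hρc _)).ne'] at h
    exact h.hasDerivWithinAt
  have hGf : primitive ρ (f t) = t :=
    eq_of_has_deriv_right_eq hcomp (fun x _ => (hasDerivAt_id x).hasDerivWithinAt)
      ((continuous_primitive hρ).comp hf.continuous).continuousOn continuousOn_id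
      (by simp [hf0, primitive_zero]) t ⟨ht, le_rfl⟩
  rw [OrderIso.eq_symm_apply, coe_primitiveOrderIso, hGf]

end Primitive

theorem continuous_sqrt_one_add_two_mul_sq : Continuous fun s : ℝ => √(1 + 2 * s ^ 2) := by
  fun_prop

theorem one_le_sqrt_one_add_two_mul_sq (s : ℝ) : 1 ≤ √(1 + 2 * s ^ 2) :=
  Real.one_le_sqrt.2 (by nlinarith [sq_nonneg s])

theorem rpow_neg_half_eq_inv_sqrt {x : ℝ} (hx : 0 ≤ x) : x ^ (-(1/2) : ℝ) = (√x)⁻¹ := by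
  rw [Real.rpow_neg hx, Real.sqrt_eq_rpow]

end DualVariable

open DualVariable in
theorem stmt_0 :
    ∃! f : ℝ → ℝ,
      f 0 = 0 ∧
      (∀ t : ℝ, 0 ≤ t → deriv f t = (1 + 2 * f t ^ 2) ^ (-(1/2) : ℝ)) ∧
      (∀ t : ℝ, t ≤ 0 → f t = -f (-t)) ∧
      ContDiff ℝ 1 f ∧ StrictMono f ∧ Function.Bijective f := by
  set e := primitiveOrderIso continuous_sqrt_one_add_two_mul_sq one_pos
    one_le_sqrt_one_add_two_mul_sq
  have heven : ∀ s : ℝ, √(1 + 2 * (-s) ^ 2) = √(1 + 2 * s ^ 2) := by simp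
  have hrpow (x : ℝ) : (1 + 2 * x ^ 2) ^ (-(1/2) : ℝ) = (√(1 + 2 * x ^ 2))⁻¹ :=
    rpow_neg_half_eq_inv_sqrt (by positivity)
  refine ⟨e.symm, ⟨?_, fun t _ => ?_, fun t _ => ?_, contDiff_primitiveOrderIso_symm _ _ _,
    e.symm.strictMono, e.symm.bijective⟩, ?_⟩
  · rw [OrderIso.symm_apply_eq, coe_primitiveOrderIso, primitive_zero]
  · rw [hrpow, (hasDerivAt_primitiveOrderIso_symm _ _ _ t).deriv]
  · rw [primitiveOrderIso_symm_neg _ _ _ heven, neg_neg]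
  rintro f ⟨hf0, hfd, hfodd, hfC1, -, -⟩
  have hagree : ∀ t, 0 ≤ t → f t = e.symm t := fun t ht =>
    eq_primitiveOrderIso_symm_of_deriv _ _ _ (hfC1.differentiable one_ne_zero) hf0
      (fun t ht => (hfd t ht).trans (hrpow _)) ht
  funext t
  rcases le_total 0 t with ht | ht
  · exact hagree t ht
  · rw [hfodd t ht, hagree (-t) (neg_nonneg.2 ht), primitiveOrderIso_symm_neg _ _ _ heven, neg_neg]
end
end

section
/- Let f be the odd solution of f'(t) = (1+2f(t)²)^(-1/2), f(0)=0. Then f(t)/√t → 2^(1/4) as t → +∞. -/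
/-!
Along the solution, `(f²)' = 2f / √(1 + 2f²)`, which tends to `√2` once `f → ∞`; hence
`f(t)² / t → √2` and `f(t) / √t → 2^(1/4)`. That `f → ∞` follows from
`(f + 2f³/3)' = √(1 + 2f²) ≥ 1`.
-/

open Real Filter Set Topology Asymptotics

theorem Monotone.tendsto_atTop_of_tendsto_comp {α β γ : Type*} [LinearOrder β] [Preorder γ]
    [NoMaxOrder γ] {l : Filter α} {f : α → β} {P : β → γ} (hP : Monotone P)
    (h : Tendsto (P ∘ f) l atTop) : Tendsto f l atTop := by
  refine tendsto_atTop.2 fun M ↦ ?_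
  obtain ⟨N, hN⟩ := exists_gt (P M)
  filter_upwards [tendsto_atTop.1 h N] with a ha
  by_contra! hlt
  exact (hN.trans_le ha).not_ge (hP hlt.le)

theorem isLittleO_id_of_tendsto_deriv_zero {h h' : ℝ → ℝ}
    (hh : ∀ᶠ x in atTop, HasDerivAt h (h' x) x) (hh' : Tendsto h' atTop (𝓝 0)) :
    h =o[atTop] id := by
  refine isLittleO_iff.2 fun c hc ↦ ?_
  obtain ⟨T, hT⟩ := eventually_atTop.1 <| (hh.and (hh'.eventually (Metric.closedBall_mem_nhds 0
    (half_pos hc)))).and (eventually_ge_atTop 0)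
  have hbound : ∀ x, T ≤ x → ‖h x - h T‖ ≤ c / 2 * (x - T) := fun x hx ↦
    norm_image_sub_le_of_norm_deriv_le_segment' (b := x)
      (fun y hy ↦ (hT y hy.1).1.1.hasDerivWithinAt)
      (fun y hy ↦ by simpa using (hT y hy.1).1.2) x ⟨hx, le_rfl⟩
  have hT0 : 0 ≤ T := (hT T le_rfl).2
  filter_upwards [eventually_ge_atTop T, eventually_ge_atTop (2 * ‖h T‖ / c)] with x hxT hx
  rw [div_le_iff₀ hc] at hx
  calc ‖h x‖ ≤ ‖h T‖ + c / 2 * (x - T) := by linarith [norm_sub_norm_le (h x) (h T), hbound x hxT]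
    _ ≤ c * ‖id x‖ := by rw [id, Real.norm_of_nonneg (hT0.trans hxT)]; nlinarith

theorem tendsto_div_of_tendsto_deriv {g g' : ℝ → ℝ} {L : ℝ}
    (hg : ∀ᶠ x in atTop, HasDerivAt g (g' x) x) (hg' : Tendsto g' atTop (𝓝 L)) :
    Tendsto (fun x ↦ g x / x) atTop (𝓝 L) := by
  have hlin : (fun x ↦ g x - L * x) =o[atTop] id :=
    isLittleO_id_of_tendsto_deriv_zero (h' := fun x ↦ g' x - L)
      (hg.mono fun x hx ↦ (hx.sub ((hasDerivAt_id' x).const_mul L)).congr_deriv (by ring))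
      (by simpa using hg'.sub_const L)
  have := (hlin.tendsto_div_nhds_zero).add_const L
  rw [zero_add] at this
  refine this.congr' ?_
  filter_upwards [eventually_ne_atTop 0] with x hx
  simp only [id]
  field_simp
  ring

theorem tendsto_two_mul_div_sqrt_one_add_two_sq :
    Tendsto (fun y : ℝ ↦ 2 * y / √(1 + 2 * y ^ 2)) atTop (𝓝 √2) := by
  have hden : Tendsto (fun y : ℝ ↦ 1 + 2 * y ^ 2) atTop atTop :=
    tendsto_atTop_add_const_left _ 1 ((tendsto_pow_atTop two_ne_zero).const_mul_atTop two_pos)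
  have hsq : Tendsto (fun y : ℝ ↦ 2 - 2 / (1 + 2 * y ^ 2)) atTop (𝓝 2) := by
    simpa using tendsto_const_nhds.sub (tendsto_const_nhds.div_atTop hden)
  refine ((continuous_sqrt.tendsto 2).comp hsq).congr' ?_
  filter_upwards [eventually_ge_atTop 0] with y hy
  have hpos : 0 < 1 + 2 * y ^ 2 := by positivity
  rw [Function.comp_apply, show 2 - 2 / (1 + 2 * y ^ 2) = (2 * y) ^ 2 / (1 + 2 * y ^ 2) by
    field_simp; ring, sqrt_div' _ hpos.le, sqrt_sq (by positivity)]

theorem add_le_cubic_of_hasDerivAt_ode {f : ℝ → ℝ}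
    (hf : ∀ t, 0 ≤ t → HasDerivAt f (√(1 + 2 * f t ^ 2))⁻¹ t) {t : ℝ} (ht : 0 ≤ t) :
    t + (f 0 + 2 / 3 * f 0 ^ 3) ≤ f t + 2 / 3 * f t ^ 3 := by
  have hP : ∀ s ∈ Ici (0 : ℝ),
      HasDerivAt (fun s ↦ f s + 2 / 3 * f s ^ 3) (√(1 + 2 * f s ^ 2)) s := fun s hs ↦ by
    refine ((hf s hs).fun_add (((hf s hs).fun_pow 3).const_mul (2 / 3))).congr_deriv ?_
    field_simp
    rw [sq_sqrt (by positivity)]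
    push_cast
    ring
  have := (convex_Ici 0).mul_sub_le_image_sub_of_le_deriv (C := 1) (HasDerivAt.continuousOn hP)
    (fun s hs ↦ (hP s (interior_subset hs)).differentiableAt.differentiableWithinAt)
    (fun s hs ↦ (hP s (interior_subset hs)).deriv ▸ one_le_sqrt.2 (by nlinarith))
    0 self_mem_Ici t ht ht
  linarith

theorem tendsto_atTop_of_hasDerivAt_ode {f : ℝ → ℝ}
    (hf : ∀ t, 0 ≤ t → HasDerivAt f (√(1 + 2 * f t ^ 2))⁻¹ t) : Tendsto f atTop atTop := by
  have hmono : Monotone fun y : ℝ ↦ y + 2 / 3 * y ^ 3 :=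
    monotone_id.add ((Odd.strictMono_pow ⟨1, rfl⟩).monotone.const_mul (by norm_num))
  refine hmono.tendsto_atTop_of_tendsto_comp (tendsto_atTop_mono' _ ?_
    (tendsto_atTop_add_const_right _ (f 0 + 2 / 3 * f 0 ^ 3) tendsto_id))
  filter_upwards [eventually_ge_atTop 0] with t ht using add_le_cubic_of_hasDerivAt_ode hf ht

theorem hasDerivAt_sq_of_hasDerivAt_ode {f : ℝ → ℝ}
    (hf : ∀ t, 0 ≤ t → HasDerivAt f (√(1 + 2 * f t ^ 2))⁻¹ t) {t : ℝ} (ht : 0 ≤ t) :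
    HasDerivAt (fun s ↦ f s ^ 2) (2 * f t / √(1 + 2 * f t ^ 2)) t := by
  refine ((hf t ht).fun_pow 2).congr_deriv ?_
  push_cast
  ring

theorem stmt_3_general (f : ℝ → ℝ)
    (hC1 : ContDiff ℝ 1 f)
    (hder : ∀ t : ℝ, 0 ≤ t → deriv f t = (1 + 2 * f t ^ 2) ^ (-(1/2) : ℝ))  :
    Tendsto (fun t : ℝ => f t / Real.sqrt t) atTop (nhds ((2 : ℝ) ^ ((1:ℝ)/4))) := by
  have hf : ∀ t, 0 ≤ t → HasDerivAt f (√(1 + 2 * f t ^ 2))⁻¹ t := fun t ht ↦ by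
    rw [sqrt_eq_rpow, ← rpow_neg (by positivity), ← hder t ht]
    exact ((hC1.differentiable one_ne_zero) t).hasDerivAt
  have htop : Tendsto f atTop atTop := tendsto_atTop_of_hasDerivAt_ode hf
  have hsq : Tendsto (fun t ↦ f t ^ 2 / t) atTop (𝓝 √2) :=
    tendsto_div_of_tendsto_deriv
      (eventually_ge_atTop 0 |>.mono fun _ ↦ hasDerivAt_sq_of_hasDerivAt_ode hf)
      (tendsto_two_mul_div_sqrt_one_add_two_sq.comp htop)
  have hroot : √√2 = (2 : ℝ) ^ ((1 : ℝ) / 4) := by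
    rw [sqrt_eq_rpow, sqrt_eq_rpow, ← rpow_mul zero_le_two]
    norm_num
  rw [← hroot]
  refine ((continuous_sqrt.tendsto _).comp hsq).congr' ?_
  filter_upwards [htop.eventually_ge_atTop 0] with t hft
  rw [Function.comp_apply, sqrt_div (sq_nonneg _), sqrt_sq hft]

theorem stmt_3 (f : ℝ → ℝ)
    (hodd : ∀ t : ℝ, f (-t) = -f t)
    (hf0 : f 0 = 0)
    (hC1 : ContDiff ℝ 1 f)
    (hder : ∀ t : ℝ, 0 ≤ t → deriv f t = (1 + 2 * f t ^ 2) ^ (-(1/2) : ℝ))  :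
    Tendsto (fun t : ℝ => f t / Real.sqrt t) atTop (nhds ((2 : ℝ) ^ ((1:ℝ)/4))) :=
  stmt_3_general f hC1 hder
end

section
/- Let f be the odd solution of f'(t) = (1+2f(t)²)^(-1/2), f(0)=0. Then |f(t)|/2 ≤ |t| f'(t) ≤ |f(t)| for all t ∈ ℝ. -/
open Real Filter Set

/-! With `s = √(1 + 2 f²)` we have `f' = 1 / s` on `t ≥ 0`, and `g = f s` satisfies
`g' = (1 + 4 f²) / (1 + 2 f²) ∈ [1, 2]`, so `t ≤ g t ≤ 2 t` by the mean value theorem.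
Dividing by `s` gives `f / 2 ≤ t f' ≤ f`. For `t < 0` use that `f'` is even. -/

lemma deriv_neg_eq_of_odd {f : ℝ → ℝ} (hodd : ∀ t, f (-t) = -f t) (t : ℝ) :
    deriv f (-t) = deriv f t := by
  have h := deriv_comp_neg f t
  rw [funext hodd, deriv.fun_neg] at h
  linarith

lemma one_le_one_add_four_mul_sq_div (y : ℝ) : 1 ≤ (1 + 4 * y ^ 2) / (1 + 2 * y ^ 2) := by
  rw [one_le_div (by positivity)]
  nlinarith [sq_nonneg y]

lemma one_add_four_mul_sq_div_le_two (y : ℝ) : (1 + 4 * y ^ 2) / (1 + 2 * y ^ 2) ≤ 2 := by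
  rw [div_le_iff₀ (by positivity)]
  linarith

section HalfLine

variable {f : ℝ → ℝ}

lemma hasDerivAt_mul_sqrt_one_add_two_mul_sq {t : ℝ}
    (hf : HasDerivAt f (√(1 + 2 * f t ^ 2))⁻¹ t) :
    HasDerivAt (fun x ↦ f x * √(1 + 2 * f x ^ 2)) ((1 + 4 * f t ^ 2) / (1 + 2 * f t ^ 2)) t := by
  have hpos : 0 < 1 + 2 * f t ^ 2 := by positivity
  have hu : HasDerivAt (fun x ↦ 1 + 2 * f x ^ 2) (4 * f t * (√(1 + 2 * f t ^ 2))⁻¹) t :=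
    (((hf.fun_pow 2).const_mul 2).const_add 1).congr_deriv (by ring)
  refine (hf.mul (hu.sqrt hpos.ne')).congr_deriv ?_
  have hsq : √(1 + 2 * f t ^ 2) ^ 2 = 1 + 2 * f t ^ 2 := sq_sqrt hpos.le
  have hs0 : √(1 + 2 * f t ^ 2) ≠ 0 := (sqrt_pos.mpr hpos).ne'
  field_simp
  rw [hsq]
  ring

lemma le_mul_sqrt_le_two_mul (hf0 : f 0 = 0)
    (hf : ∀ t, 0 ≤ t → HasDerivAt f (√(1 + 2 * f t ^ 2))⁻¹ t) {t : ℝ} (ht : 0 ≤ t) :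
    t ≤ f t * √(1 + 2 * f t ^ 2) ∧ f t * √(1 + 2 * f t ^ 2) ≤ 2 * t := by
  have hg := fun x hx ↦ hasDerivAt_mul_sqrt_one_add_two_mul_sq (hf x hx)
  have hcont : ContinuousOn (fun x ↦ f x * √(1 + 2 * f x ^ 2)) (Ici 0) :=
    fun x hx ↦ (hg x hx).continuousAt.continuousWithinAt
  have hdiff : DifferentiableOn ℝ (fun x ↦ f x * √(1 + 2 * f x ^ 2)) (interior (Ici 0)) := by
    rw [interior_Ici]
    exact fun x hx ↦ (hg x (le_of_lt hx)).differentiableAt.differentiableWithinAt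
  have hderiv : ∀ x ∈ interior (Ici (0 : ℝ)),
      deriv (fun x ↦ f x * √(1 + 2 * f x ^ 2)) x = (1 + 4 * f x ^ 2) / (1 + 2 * f x ^ 2) := by
    rw [interior_Ici]
    exact fun x hx ↦ (hg x (le_of_lt hx)).deriv
  have hlow := (convex_Ici 0).mul_sub_le_image_sub_of_le_deriv hcont hdiff (C := 1)
    (fun x hx ↦ (hderiv x hx).symm ▸ one_le_one_add_four_mul_sq_div _)
    0 self_mem_Ici t ht ht
  have hup := (convex_Ici 0).image_sub_le_mul_sub_of_deriv_le hcont hdiff (C := 2)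
    (fun x hx ↦ (hderiv x hx).symm ▸ one_add_four_mul_sq_div_le_two _)
    0 self_mem_Ici t ht ht
  simp only [hf0, zero_mul, sub_zero] at hlow hup
  exact ⟨by linarith, by linarith⟩

lemma abs_div_two_le_abs_mul_deriv_le_abs_of_nonneg (hf0 : f 0 = 0)
    (hf : ∀ t, 0 ≤ t → HasDerivAt f (√(1 + 2 * f t ^ 2))⁻¹ t) {t : ℝ} (ht : 0 ≤ t) :
    |f t| / 2 ≤ |t| * deriv f t ∧ |t| * deriv f t ≤ |f t| := by
  obtain ⟨hlow, hup⟩ := le_mul_sqrt_le_two_mul hf0 hf ht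
  have hs : 0 < √(1 + 2 * f t ^ 2) := sqrt_pos.mpr (by positivity)
  have hft : 0 ≤ f t := (mul_nonneg_iff_of_pos_right hs).mp (ht.trans hlow)
  rw [abs_of_nonneg ht, abs_of_nonneg hft, (hf t ht).deriv, ← div_eq_mul_inv,
    le_div_iff₀ hs, div_le_iff₀ hs]
  constructor <;> linarith

end HalfLine

theorem stmt_4 (f : ℝ → ℝ)
    (hodd : ∀ t : ℝ, f (-t) = -f t)
    (hf0 : f 0 = 0)
    (hC1 : ContDiff ℝ 1 f)
    (hder : ∀ t : ℝ, 0 ≤ t → deriv f t = (1 + 2 * f t ^ 2) ^ (-(1/2) : ℝ))  :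
    ∀ t : ℝ, |f t| / 2 ≤ |t| * deriv f t ∧ |t| * deriv f t ≤ |f t| := by
  have hf : ∀ t, 0 ≤ t → HasDerivAt f (√(1 + 2 * f t ^ 2))⁻¹ t := fun t ht ↦ by
    rw [sqrt_eq_rpow, ← rpow_neg (by positivity), ← hder t ht]
    exact (hC1.differentiable one_ne_zero t).hasDerivAt
  intro t
  rcases le_total 0 t with ht | ht
  · exact abs_div_two_le_abs_mul_deriv_le_abs_of_nonneg hf0 hf ht
  · simpa [hodd, deriv_neg_eq_of_odd hodd] using
      abs_div_two_le_abs_mul_deriv_le_abs_of_nonneg hf0 hf (neg_nonneg.mpr ht)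
end

section
/- Let f be the odd solution of f'(t) = (1+2f(t)²)^(-1/2), f(0)=0. Then |f(t)| ≤ 2^(1/4) |t|^(1/2) for all t ∈ ℝ. -/
open Real Set

/-!
Along the solution, `(f²)' = 2 f f' = 2f / √(1 + 2f²)`, whose absolute value is at most `√2`.
Since `f 0 = 0`, the mean value inequality gives `f(t)² ≤ √2 t` for `t ≥ 0`, and taking square
roots gives the bound there; oddness of `f` carries it over to `t < 0`.
-/

lemma abs_two_mul_mul_rpow_neg_half_le_sqrt_two (u : ℝ) :
    |2 * u * (1 + 2 * u ^ 2) ^ (-(1/2) : ℝ)| ≤ √2 := by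
  have hpos : 0 < 1 + 2 * u ^ 2 := by positivity
  rw [rpow_neg hpos.le, ← sqrt_eq_rpow, abs_mul, abs_inv, abs_of_pos (sqrt_pos.2 hpos),
    mul_inv_le_iff₀ (sqrt_pos.2 hpos), ← sqrt_mul zero_le_two, ← sqrt_sq_eq_abs]
  exact sqrt_le_sqrt (by nlinarith)

lemma sq_le_mul_of_abs_two_mul_deriv_le {f : ℝ → ℝ} (hf : Differentiable ℝ f) (h0 : f 0 = 0)
    {C : ℝ} (hC : ∀ x, 0 ≤ x → |2 * f x * deriv f x| ≤ C) {t : ℝ} (ht : 0 ≤ t) :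
    f t ^ 2 ≤ C * t := by
  have hsq : ∀ x ∈ Icc 0 t,
      HasDerivWithinAt (fun x ↦ f x ^ 2) (2 * f x * deriv f x) (Icc 0 t) x :=
    fun x _ ↦ by simpa using (hf x).hasDerivAt.hasDerivWithinAt.fun_pow 2
  have hmvt := norm_image_sub_le_of_norm_deriv_le_segment' hsq (fun x hx ↦ hC x hx.1) t
    (right_mem_Icc.2 ht)
  rw [h0, zero_pow two_ne_zero, sub_zero, sub_zero, norm_eq_abs] at hmvt
  exact (le_abs_self _).trans hmvt

lemma abs_le_sqrt_mul_sqrt_of_sq_le_mul {x a t : ℝ} (ha : 0 ≤ a) (h : x ^ 2 ≤ a * t) :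
    |x| ≤ √a * √t := by
  rw [← sqrt_mul ha, ← sqrt_sq_eq_abs]
  exact sqrt_le_sqrt h

lemma Function.Odd.abs_apply_abs {α β : Type*} [AddGroup α] [LinearOrder α] [AddGroup β]
    [Lattice β] {f : α → β} (hf : f.Odd) (t : α) : |f (|t|)| = |f t| := by
  rcases abs_choice t with h | h <;> rw [h]
  rw [hf.eq, abs_neg]

theorem stmt_5 (f : ℝ → ℝ)
    (hodd : ∀ t : ℝ, f (-t) = -f t)
    (hf0 : f 0 = 0)
    (hC1 : ContDiff ℝ 1 f)
    (hder : ∀ t : ℝ, 0 ≤ t → deriv f t = (1 + 2 * f t ^ 2) ^ (-(1/2) : ℝ))  :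
    ∀ t : ℝ, |f t| ≤ (2 : ℝ) ^ ((1:ℝ)/4) * |t| ^ ((1:ℝ)/2) := by
  intro t
  have hsq : f |t| ^ 2 ≤ √2 * |t| :=
    sq_le_mul_of_abs_two_mul_deriv_le (hC1.differentiable one_ne_zero) hf0
      (fun x hx ↦ hder x hx ▸ abs_two_mul_mul_rpow_neg_half_le_sqrt_two (f x)) (abs_nonneg t)
  have hconst : √(√2) = (2 : ℝ) ^ ((1:ℝ)/4) := by
    rw [sqrt_eq_rpow, sqrt_eq_rpow, ← rpow_mul zero_le_two]
    norm_num
  rw [← Function.Odd.abs_apply_abs hodd, ← hconst, ← sqrt_eq_rpow]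
  exact abs_le_sqrt_mul_sqrt_of_sq_le_mul (sqrt_nonneg 2) hsq
end

section
/- Let f be the odd solution of f'(t) = (1+2f(t)²)^(-1/2), f(0)=0. Then there exist constants C₁, C₂ > 0 such that |f(t)| ≥ C₁ |t| whenever |t| ≤ 1, and |f(t)| ≥ C₂ |t|^(1/2) whenever |t| ≥ 1. -/
/-!
Since `f' ≥ 0` on `[0, ∞)`, `f` is nonnegative there, and then `√(1 + 2 f²) ≤ 1 + 2 f` shows that
`f + f² - t` is nondecreasing, so `t ≤ f t + f t ²` for `t ≥ 0`. For `t ≤ 1` this forces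
`f t ≥ t / 2`, and for `t ≥ 1` it forces `f t ≥ √t / 2`; oddness transfers both bounds to `t < 0`.
-/

open Real Filter Set

lemma monotoneOn_Ici_of_hasDerivAt_nonneg {g g' : ℝ → ℝ} {a : ℝ}
    (hg : ∀ x ∈ Ici a, HasDerivAt g (g' x) x) (hg' : ∀ x ∈ Ioi a, 0 ≤ g' x) :
    MonotoneOn g (Ici a) := by
  refine monotoneOn_of_hasDerivWithinAt_nonneg (f' := g') (convex_Ici a)
    (fun x hx ↦ (hg x hx).continuousAt.continuousWithinAt) (fun x hx ↦ ?_) (fun x hx ↦ ?_)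
  all_goals rw [interior_Ici] at hx
  · exact (hg x (mem_Ici_of_Ioi hx)).hasDerivWithinAt
  · exact hg' x hx

lemma abs_apply_eq_apply_abs_of_odd {f : ℝ → ℝ} (hodd : Function.Odd f)
    (hnonneg : ∀ t, 0 ≤ t → 0 ≤ f t) (t : ℝ) : |f t| = f |t| := by
  rcases le_total 0 t with ht | ht
  · rw [abs_of_nonneg ht, abs_of_nonneg (hnonneg t ht)]
  · rw [abs_of_nonpos ht, ← abs_neg, ← hodd, abs_of_nonneg (hnonneg _ (neg_nonneg.2 ht))]

lemma half_le_of_le_add_sq {t y : ℝ} (hy : 0 ≤ y) (ht : t ≤ 1) (h : t ≤ y + y ^ 2) :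
    t / 2 ≤ y := by
  rcases le_total y 1 with hy1 | hy1 <;> nlinarith

lemma sqrt_div_two_le_of_le_add_sq {t y : ℝ} (hy : 0 ≤ y) (ht : 1 ≤ t) (h : t ≤ y + y ^ 2) :
    √t / 2 ≤ y := by
  have hsqrt : √t ^ 2 = t := sq_sqrt (by linarith)
  have hsqrt_one : 1 ≤ √t := one_le_sqrt.2 ht
  rcases le_total y 1 with hy1 | hy1 <;> nlinarith

section ODE

variable {f : ℝ → ℝ} (hf0 : f 0 = 0)
  (hf : ∀ t, 0 ≤ t → HasDerivAt f (√(1 + 2 * f t ^ 2))⁻¹ t)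
include hf0 hf

lemma nonneg_of_hasDerivAt_inv_sqrt {t : ℝ} (ht : 0 ≤ t) : 0 ≤ f t := by
  have hmono : MonotoneOn f (Ici 0) :=
    monotoneOn_Ici_of_hasDerivAt_nonneg hf fun x _ ↦ by positivity
  simpa [hf0] using hmono self_mem_Ici ht ht

lemma le_add_sq_of_hasDerivAt_inv_sqrt {t : ℝ} (ht : 0 ≤ t) : t ≤ f t + f t ^ 2 := by
  have hderiv : ∀ x ∈ Ici (0 : ℝ), HasDerivAt (fun s ↦ f s + f s ^ 2 - s)
      ((√(1 + 2 * f x ^ 2))⁻¹ + (2 : ℕ) * f x ^ 1 * (√(1 + 2 * f x ^ 2))⁻¹ - 1) x :=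
    fun x hx ↦ ((hf x hx).add ((hf x hx).pow 2)).sub (hasDerivAt_id x)
  have hmono := monotoneOn_Ici_of_hasDerivAt_nonneg hderiv fun x hx ↦ by
    have hfx : 0 ≤ f x := nonneg_of_hasDerivAt_inv_sqrt hf0 hf (le_of_lt hx)
    have hsqrt : √(1 + 2 * f x ^ 2) ≤ 1 + 2 * f x := sqrt_le_iff.2 ⟨by linarith, by nlinarith⟩
    have hpos : 0 < √(1 + 2 * f x ^ 2) := sqrt_pos.2 (by positivity)
    rw [sub_nonneg, ← div_eq_mul_inv, ← one_div, ← add_div, le_div_iff₀ hpos]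
    push_cast
    linarith
  simpa [hf0] using hmono self_mem_Ici ht ht

end ODE

theorem stmt_7 (f : ℝ → ℝ)
    (hodd : ∀ t : ℝ, f (-t) = -f t)
    (hf0 : f 0 = 0)
    (hC1 : ContDiff ℝ 1 f)
    (hder : ∀ t : ℝ, 0 ≤ t → deriv f t = (1 + 2 * f t ^ 2) ^ (-(1/2) : ℝ))  :
    ∃ C₁ > (0:ℝ), ∃ C₂ > (0:ℝ),
      (∀ t : ℝ, |t| ≤ 1 → C₁ * |t| ≤ |f t|) ∧
      (∀ t : ℝ, 1 ≤ |t| → C₂ * |t| ^ ((1:ℝ)/2) ≤ |f t|) := by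
  have hf : ∀ t, 0 ≤ t → HasDerivAt f (√(1 + 2 * f t ^ 2))⁻¹ t := fun t ht ↦ by
    rw [sqrt_eq_rpow, ← rpow_neg (by positivity), ← hder t ht]
    exact (hC1.differentiable one_ne_zero t).hasDerivAt
  have hnonneg := fun t ↦ nonneg_of_hasDerivAt_inv_sqrt (t := t) hf0 hf
  have hgrowth := fun t ↦ le_add_sq_of_hasDerivAt_inv_sqrt (t := t) hf0 hf
  refine ⟨1 / 2, by norm_num, 1 / 2, by norm_num, fun t ht ↦ ?_, fun t ht ↦ ?_⟩
  all_goals rw [abs_apply_eq_apply_abs_of_odd hodd hnonneg]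
  · have := half_le_of_le_add_sq (hnonneg _ (abs_nonneg t)) ht (hgrowth _ (abs_nonneg t))
    linarith
  · have := sqrt_div_two_le_of_le_add_sq (hnonneg _ (abs_nonneg t)) ht (hgrowth _ (abs_nonneg t))
    rw [← sqrt_eq_rpow]
    linarith
end

section
/- Let f be the odd solution of f'(t) = (1+2f(t)²)^(-1/2), f(0)=0, and let q > 1. Then the function t ↦ f(t)^q f'(t) is strictly increasing on (0, ∞). -/
open Real Filter Set

/-
Since f' = (1 + 2f²)^(-1/2) > 0, f is strictly increasing and positive on (0, ∞), so on that
interval t ↦ f(t)^q f'(t) is the composition of f with x ↦ x^q (1 + 2x²)^(-1/2). The latter is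
x^(q-1) · x/√(1 + 2x²), a product of a nondecreasing factor (q ≥ 1) and the strictly increasing
factor √(x²/(1 + 2x²)).
-/

lemma mul_rpow_neg_half_eq_sqrt {c x : ℝ} (hc : 0 ≤ c) (hx : 0 ≤ x) :
    x * (1 + c * x ^ 2) ^ (-(1/2) : ℝ) = √(x ^ 2 / (1 + c * x ^ 2)) := by
  rw [rpow_neg (by positivity), ← sqrt_eq_rpow, sqrt_div' _ (by positivity), sqrt_sq hx,
    div_eq_mul_inv]

lemma strictMonoOn_mul_rpow_neg_half {c : ℝ} (hc : 0 ≤ c) :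
    StrictMonoOn (fun x : ℝ => x * (1 + c * x ^ 2) ^ (-(1/2) : ℝ)) (Ici 0) := by
  intro a ha b hb hab
  simp only [mem_Ici] at ha hb ⊢
  rw [mul_rpow_neg_half_eq_sqrt hc ha, mul_rpow_neg_half_eq_sqrt hc hb]
  apply sqrt_lt_sqrt (by positivity)
  rw [div_lt_div_iff₀ (by positivity) (by positivity)]
  nlinarith [pow_lt_pow_left₀ hab ha two_ne_zero]

lemma strictMonoOn_rpow_mul_rpow_neg_half {c q : ℝ} (hc : 0 ≤ c) (hq : 1 ≤ q) :
    StrictMonoOn (fun x : ℝ => x ^ q * (1 + c * x ^ 2) ^ (-(1/2) : ℝ)) (Ioi 0) := by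
  intro a ha b hb hab
  simp only [mem_Ioi] at ha hb
  have hsplit : ∀ x : ℝ, 0 < x → x ^ q = x ^ (q - 1) * x := fun x hx => by
    rw [← rpow_add_one hx.ne', sub_add_cancel]
  simp only [hsplit a ha, hsplit b hb, mul_assoc]
  exact mul_lt_mul' (rpow_le_rpow ha.le hab.le (by linarith))
    (strictMonoOn_mul_rpow_neg_half hc ha.le hb.le hab)
    (by positivity) (rpow_pos_of_pos hb _)

theorem stmt_9_general (f : ℝ → ℝ)
    (hf0 : f 0 = 0)
    (hC1 : ContDiff ℝ 1 f)
    (hder : ∀ t : ℝ, 0 ≤ t → deriv f t = (1 + 2 * f t ^ 2) ^ (-(1/2) : ℝ)) (q : ℝ) (hq : 1 < q) :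
    StrictMonoOn (fun t : ℝ => f t ^ q * deriv f t) (Set.Ioi 0) := by
  have hmono : StrictMonoOn f (Ici 0) := by
    refine strictMonoOn_of_deriv_pos (convex_Ici 0) hC1.continuous.continuousOn fun t ht => ?_
    rw [interior_Ici] at ht
    rw [hder t (le_of_lt ht)]
    exact rpow_pos_of_pos (by positivity) _
  have hpos : MapsTo f (Ioi 0) (Ioi 0) := fun t ht => by
    simpa [hf0] using hmono self_mem_Ici (mem_Ici.2 (le_of_lt ht)) ht
  refine ((strictMonoOn_rpow_mul_rpow_neg_half zero_le_two hq.le).comp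
    (hmono.mono Ioi_subset_Ici_self) hpos).congr fun t ht => ?_
  simp [hder t (le_of_lt ht)]

theorem stmt_9 (f : ℝ → ℝ)
    (hodd : ∀ t : ℝ, f (-t) = -f t)
    (hf0 : f 0 = 0)
    (hC1 : ContDiff ℝ 1 f)
    (hder : ∀ t : ℝ, 0 ≤ t → deriv f t = (1 + 2 * f t ^ 2) ^ (-(1/2) : ℝ)) (q : ℝ) (hq : 1 < q) :
    StrictMonoOn (fun t : ℝ => f t ^ q * deriv f t) (Set.Ioi 0) :=
  stmt_9_general f hf0 hC1 hder q hq
end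

section
/- Let f be the odd solution of f'(t) = (1+2f(t)²)^(-1/2), f(0)=0. Then the map t ↦ f(t)/t is strictly decreasing on (0, ∞); consequently, for any t > 0 and any s with 0 ≤ s ≤ t one has f(t)·(s/t) ≤ f(s). -/
/-!
A solution of the autonomous equation `g' = φ(g)` with `g(0) = 0`, `φ > 0`, is increasing on
`[0, ∞)`, so if `φ` decreases on `[0, ∞)` then so does `g' = φ ∘ g`, i.e. `g` is strictly concave
there. For a concave function vanishing at `0`, `g(t)/t` is the slope of the secant through the
origin, which decreases, and `g(s) ≥ (s/t) g(t)` is concavity between `0` and `t`.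
-/

open Real Set

section ConcaveThroughOrigin

variable {g : ℝ → ℝ}

theorem StrictConcaveOn.div_strictAntiOn_Ioi (hg : StrictConcaveOn ℝ (Ici 0) g) (h0 : g 0 = 0) :
    StrictAntiOn (fun t => g t / t) (Ioi 0) := by
  intro x hx y hy hxy
  have := hg.secant_strict_mono (a := 0) self_mem_Ici (mem_Ici.2 hx.le)
    (mem_Ici.2 hy.le) (ne_of_gt hx) (ne_of_gt hy) hxy
  simpa only [h0, sub_zero] using this

theorem ConcaveOn.mul_div_le (hg : ConcaveOn ℝ (Ici 0) g) (h0 : g 0 = 0) {s t : ℝ} (ht : 0 < t)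
    (hs : 0 ≤ s) (hst : s ≤ t) : g t * (s / t) ≤ g s := by
  have hst' : s / t ≤ 1 := (div_le_one ht).2 hst
  have := hg.2 (mem_Ici.2 ht.le) self_mem_Ici (div_nonneg hs ht.le) (sub_nonneg.2 hst')
    (add_sub_cancel _ _)
  simpa [h0, mul_comm, mul_div_cancel₀ s ht.ne'] using this

end ConcaveThroughOrigin

theorem strictConcaveOn_Ici_of_deriv_eq_comp {g φ : ℝ → ℝ} (h0 : g 0 = 0) (hφ_pos : ∀ y, 0 < φ y)
    (hφ_anti : StrictAntiOn φ (Ici 0)) (hder : ∀ t, 0 ≤ t → deriv g t = φ (g t)) :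
    StrictConcaveOn ℝ (Ici 0) g := by
  have hderiv_pos : ∀ t, 0 ≤ t → 0 < deriv g t := fun t ht => hder t ht ▸ hφ_pos _
  -- `deriv` is junk `0` off the points of differentiability, so `deriv g t > 0` gives it.
  have hcont : ContinuousOn g (Ici 0) := fun t ht =>
    (differentiableAt_of_deriv_ne_zero (hderiv_pos t ht).ne').continuousAt.continuousWithinAt
  have hmono : StrictMonoOn g (Ici 0) :=
    strictMonoOn_of_deriv_pos (convex_Ici 0) hcont fun t ht =>
      hderiv_pos t (interior_subset (s := Ici 0) ht)
  have hnonneg : ∀ t, 0 ≤ t → 0 ≤ g t := fun t ht =>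
    h0 ▸ hmono.monotoneOn self_mem_Ici (mem_Ici.2 ht) ht
  refine StrictAntiOn.strictConcaveOn_of_deriv (convex_Ici 0) hcont ?_
  rw [interior_Ici]
  intro x hx y hy hxy
  rw [hder x hx.le, hder y hy.le]
  exact hφ_anti (mem_Ici.2 (hnonneg x hx.le)) (mem_Ici.2 (hnonneg y hy.le))
    (hmono (mem_Ici.2 hx.le) (mem_Ici.2 hy.le) hxy)

theorem strictAntiOn_one_add_two_mul_sq_rpow_neg_half :
    StrictAntiOn (fun y : ℝ => (1 + 2 * y ^ 2) ^ (-(1/2) : ℝ)) (Ici 0) := by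
  intro x hx y hy hxy
  have hsq : x ^ 2 < y ^ 2 := pow_lt_pow_left₀ hxy hx two_ne_zero
  exact rpow_lt_rpow_of_neg (by positivity) (by linarith) (by norm_num)

theorem stmt_10_general (f : ℝ → ℝ)
    (hf0 : f 0 = 0)
    (hder : ∀ t : ℝ, 0 ≤ t → deriv f t = (1 + 2 * f t ^ 2) ^ (-(1/2) : ℝ))  :
    StrictAntiOn (fun t : ℝ => f t / t) (Set.Ioi 0) ∧
      ∀ t : ℝ, 0 < t → ∀ s : ℝ, 0 ≤ s → s ≤ t → f t * (s / t) ≤ f s := by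
  have hconcave : StrictConcaveOn ℝ (Ici 0) f :=
    strictConcaveOn_Ici_of_deriv_eq_comp hf0 (fun y => rpow_pos_of_pos (by positivity) _)
      strictAntiOn_one_add_two_mul_sq_rpow_neg_half hder
  exact ⟨hconcave.div_strictAntiOn_Ioi hf0,
    fun t ht s hs hst => hconcave.concaveOn.mul_div_le hf0 ht hs hst⟩

theorem stmt_10 (f : ℝ → ℝ)
    (hodd : ∀ t : ℝ, f (-t) = -f t)
    (hf0 : f 0 = 0)
    (hC1 : ContDiff ℝ 1 f)
    (hder : ∀ t : ℝ, 0 ≤ t → deriv f t = (1 + 2 * f t ^ 2) ^ (-(1/2) : ℝ))  :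
    StrictAntiOn (fun t : ℝ => f t / t) (Set.Ioi 0) ∧
      ∀ t : ℝ, 0 < t → ∀ s : ℝ, 0 ≤ s → s ≤ t → f t * (s / t) ≤ f s :=
  stmt_10_general f hf0 hder
end
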